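/- Let m ∈ ℕ, let A be a skew-Hermitian m×m complex matrix, let B be an m×m complex matrix, and define Θ(t) = exp(−tA)·B·exp(tA). Let T > 0, C > 0, let u : [0,T] → ℝ be piecewise constant, and let (w_k)_{k∈ℕ} be piecewise constant functions w_k : [0,T] → ℝ with |w_k(t)| ≤ C for all k and t, such that ∫_0^t w_k(s) ds → ∫_0^t u(s) ds as k → ∞ uniformly for t ∈ [0,T]. Then ∫_0^t w_k(s)Θ(s) ds → ∫_0^t u(s)Θ(s) ds as k → ∞, uniformly for t ∈ [0,T], in the operator norm on m×m complex matrices. -/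

import Mathlib

open MeasureTheory Set Filter

open scoped Matrix.Norms.L2Operator

/-!
Cut `[0, t]` into `N` equal pieces, with `N` chosen from the uniform continuity of `Θ` on
`[0, T]` alone. On each piece, freezing `Θ` at the left endpoint costs at most
`sup |u - w k| · ε · (length of the piece)`, and what is left is the integral of `u - w k` over
the piece times a bounded matrix: a difference of two primitives, which is uniformly small for
large `k`. Summing the `N` pieces gives a bound independent of `t`.
-/

/-- A function `f` is piecewise constant on `[0,T]` if there is a finite partition
`0 = t_0 < t_1 < … < t_m = T` such that `f` is constant on each interval `[t_{j-1}, t_j)`. -/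
def PiecewiseConstOn (f : ℝ → ℝ) (T : ℝ) : Prop :=
  ∃ (m : ℕ) (t : ℕ → ℝ), 0 < m ∧ t 0 = 0 ∧ t m = T ∧
    (∀ j < m, t j < t (j + 1)) ∧
    ∀ j < m, ∀ x ∈ Set.Ico (t j) (t (j + 1)), f x = f (t j)

namespace PiecewiseConstOn

variable {f : ℝ → ℝ} {T : ℝ}

theorem exists_cover (hf : PiecewiseConstOn f T) :
    ∃ (n : ℕ) (t : ℕ → ℝ), Ico 0 T ⊆ ⋃ j ∈ Finset.range n, Ico (t j) (t (j + 1)) ∧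
      ∀ j < n, ∀ x ∈ Ico (t j) (t (j + 1)), f x = f (t j) := by
  obtain ⟨n, t, -, h0, hn, -, hconst⟩ := hf
  exact ⟨n, t, h0 ▸ hn ▸ Ico_subset_biUnion_Ico n t, hconst⟩

theorem integrableOn (hf : PiecewiseConstOn f T) : IntegrableOn f (Icc 0 T) := by
  obtain ⟨n, t, hcover, hconst⟩ := hf.exists_cover
  rw [integrableOn_Icc_iff_integrableOn_Ico]
  refine (integrableOn_finset_iUnion.2 fun j hj => ?_).mono_set hcover
  rw [integrableOn_congr_fun (hconst j (Finset.mem_range.1 hj)) measurableSet_Ico]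
  exact integrableOn_const measure_Ico_lt_top.ne

theorem exists_abs_le (hf : PiecewiseConstOn f T) : ∃ D, ∀ s ∈ Icc 0 T, |f s| ≤ D := by
  obtain ⟨n, t, hcover, hconst⟩ := hf.exists_cover
  have hvalues : (fun s => |f s|) '' Icc 0 T ⊆ insert |f T| ((fun j => |f (t j)|) '' Iio n) := by
    rintro _ ⟨s, hs, rfl⟩
    rcases hs.2.eq_or_lt with rfl | hsT
    · exact mem_insert _ _
    · obtain ⟨j, hj, hsj⟩ := mem_iUnion₂.1 (hcover ⟨hs.1, hsT⟩)
      rw [Finset.mem_range] at hj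
      exact mem_insert_of_mem _ ⟨j, hj, show |f (t j)| = |f s| by rw [hconst j hj s hsj]⟩
  obtain ⟨D, hD⟩ := (((finite_Iio n).image _).insert _ |>.subset hvalues).bddAbove
  exact ⟨D, fun s hs => hD (mem_image_of_mem _ hs)⟩

end PiecewiseConstOn

theorem ContinuousOn.exists_nat_forall_dist_le_of_dist_le_div {α : Type*} [PseudoMetricSpace α]
    {g : ℝ → α} {a b ε : ℝ} (hg : ContinuousOn g (Icc a b)) (hε : 0 < ε) :
    ∃ N : ℕ, 0 < N ∧ ∀ x ∈ Icc a b, ∀ y ∈ Icc a b, dist x y ≤ (b - a) / N →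
      dist (g x) (g y) ≤ ε := by
  obtain ⟨δ, hδ, hgδ⟩ := Metric.uniformContinuousOn_iff.1
    (isCompact_Icc.uniformContinuousOn_of_continuous hg) ε hε
  refine ⟨⌈(b - a) / δ⌉₊ + 1, Nat.succ_pos _, fun x hx y hy hxy =>
    (hgδ x hx y hy (hxy.trans_lt ?_)).le⟩
  have hceil := (div_le_iff₀ hδ).1 (Nat.le_ceil ((b - a) / δ))
  rw [div_lt_iff₀ (by positivity)]
  push_cast
  linarith

theorem MeasureTheory.IntegrableOn.intervalIntegrable_of_mem_Icc {E : Type*}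
    [NormedAddCommGroup E] {f : ℝ → E} {a b x y : ℝ} (hf : IntegrableOn f (Icc a b))
    (hx : x ∈ Icc a b) (hy : y ∈ Icc a b) : IntervalIntegrable f volume x y :=
  (hf.mono_set (uIcc_subset_Icc hx hy)).intervalIntegrable

theorem abs_integral_le_two_mul_of_abs_primitive_le {v : ℝ → ℝ} {a b x y η : ℝ}
    (hv : IntegrableOn v (Icc a b)) (hx : x ∈ Icc a b) (hy : y ∈ Icc a b)
    (hV : ∀ z ∈ Icc a b, |∫ s in a..z, v s| ≤ η) : |∫ s in x..y, v s| ≤ 2 * η := by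
  have ha : a ∈ Icc a b := left_mem_Icc.2 (hx.1.trans hx.2)
  rw [← intervalIntegral.integral_interval_sub_left (hv.intervalIntegrable_of_mem_Icc ha hy)
    (hv.intervalIntegrable_of_mem_Icc ha hx)]
  exact (abs_sub _ _).trans (by linarith [hV x hx, hV y hy])

section IntervalIntegral

variable {E : Type*} [NormedAddCommGroup E] [NormedSpace ℝ E] [CompleteSpace E]

theorem norm_integral_smul_le_of_norm_sub_le {v : ℝ → ℝ} {g : ℝ → E} {x y D ε : ℝ}
    (hxy : x ≤ y) (hv : IntervalIntegrable v volume x y) (hg : ContinuousOn g (Icc x y))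
    (hvD : ∀ s ∈ Icc x y, |v s| ≤ D) (hgε : ∀ s ∈ Icc x y, ‖g s - g x‖ ≤ ε) :
    ‖∫ s in x..y, v s • g s‖ ≤ D * ε * (y - x) + |∫ s in x..y, v s| * ‖g x‖ := by
  rw [← uIcc_of_le hxy] at hg
  have hsplit : ∫ s in x..y, v s • g s =
      (∫ s in x..y, v s • (g s - g x)) + (∫ s in x..y, v s) • g x := by
    have hgx : ContinuousOn (fun s => g s - g x) (uIcc x y) := hg.sub continuousOn_const
    rw [← intervalIntegral.integral_smul_const, ← intervalIntegral.integral_add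
      (hv.smul_continuousOn hgx) (hv.smul_continuousOn continuousOn_const)]
    simp only [smul_sub, sub_add_cancel]
  have hosc : ‖∫ s in x..y, v s • (g s - g x)‖ ≤ D * ε * (y - x) := by
    have hD : 0 ≤ D := (abs_nonneg _).trans (hvD x ⟨le_rfl, hxy⟩)
    have hpointwise : ∀ s ∈ uIoc x y, ‖v s • (g s - g x)‖ ≤ D * ε := fun s hs => by
      rw [uIoc_of_le hxy] at hs
      rw [norm_smul, Real.norm_eq_abs]
      exact mul_le_mul (hvD s (Ioc_subset_Icc_self hs)) (hgε s (Ioc_subset_Icc_self hs))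
        (norm_nonneg _) hD
    simpa only [abs_of_nonneg (sub_nonneg.2 hxy)] using
      intervalIntegral.norm_integral_le_of_norm_le_const hpointwise
  rw [hsplit, ← Real.norm_eq_abs, ← norm_smul]
  exact (norm_add_le _ _).trans (by gcongr)

theorem norm_integral_smul_le_of_forall_dist_le_div {v : ℝ → ℝ} {g : ℝ → E}
    {a b t D ε M η : ℝ} {N : ℕ} (hN : 0 < N) (hε : 0 ≤ ε) (ht : t ∈ Icc a b)
    (hv : IntegrableOn v (Icc a b)) (hg : ContinuousOn g (Icc a b))
    (hvD : ∀ s ∈ Icc a b, |v s| ≤ D) (hgM : ∀ s ∈ Icc a b, ‖g s‖ ≤ M)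
    (hgε : ∀ x ∈ Icc a b, ∀ y ∈ Icc a b, dist x y ≤ (b - a) / N → dist (g x) (g y) ≤ ε)
    (hV : ∀ x ∈ Icc a b, |∫ s in a..x, v s| ≤ η) :
    ‖∫ s in a..t, v s • g s‖ ≤ D * ε * (b - a) + N * (2 * η * M) := by
  set p : ℕ → ℝ := fun i => a + i * ((t - a) / N)
  have hab : a ≤ b := ht.1.trans ht.2
  have hNpos : (0 : ℝ) < N := Nat.cast_pos.2 hN
  have hstep_nonneg : 0 ≤ (t - a) / N := div_nonneg (sub_nonneg.2 ht.1) hNpos.le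
  have hstep : ∀ i, p (i + 1) - p i = (t - a) / N := fun i => by simp only [p]; push_cast; ring
  have hp0 : p 0 = a := by simp [p]
  have hpN : p N = t := by simp only [p]; rw [mul_div_cancel₀ _ hNpos.ne', add_sub_cancel]
  have hp : ∀ i ≤ N, p i ∈ Icc a b := fun i hi => by
    have : (i : ℝ) * ((t - a) / N) ≤ N * ((t - a) / N) := by gcongr
    rw [mul_div_cancel₀ _ hNpos.ne'] at this
    exact ⟨le_add_of_nonneg_right (by positivity), by linarith [ht.2]⟩
  have hpiece : ∀ i < N, ‖∫ s in p i..p (i + 1), v s • g s‖ ≤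
      D * ε * (p (i + 1) - p i) + 2 * η * M := fun i hi => by
    have hpi := hp i hi.le
    have hpi' := hp (i + 1) hi
    have hsub : Icc (p i) (p (i + 1)) ⊆ Icc a b := Icc_subset_Icc hpi.1 hpi'.2
    have hclose : ∀ s ∈ Icc (p i) (p (i + 1)), ‖g s - g (p i)‖ ≤ ε := fun s hs => by
      rw [← dist_eq_norm]
      refine hgε s (hsub hs) (p i) hpi ?_
      rw [Real.dist_eq, abs_of_nonneg (sub_nonneg.2 hs.1)]
      have : (t - a) / N ≤ (b - a) / N := by gcongr; exact ht.2
      linarith [hs.2, hstep i]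
    have hη := abs_integral_le_two_mul_of_abs_primitive_le hv hpi hpi' hV
    refine (norm_integral_smul_le_of_norm_sub_le (by linarith [hstep i])
      (hv.intervalIntegrable_of_mem_Icc hpi hpi') (hg.mono hsub) (fun s hs => hvD s (hsub hs))
      hclose).trans (add_le_add le_rfl ?_)
    exact mul_le_mul hη (hgM _ hpi) (norm_nonneg _) ((abs_nonneg _).trans hη)
  have hD : 0 ≤ D * ε := mul_nonneg ((abs_nonneg _).trans (hvD a ⟨le_rfl, hab⟩)) hε
  calc ‖∫ s in a..t, v s • g s‖
      = ‖∑ i ∈ Finset.range N, ∫ s in p i..p (i + 1), v s • g s‖ := by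
        rw [intervalIntegral.sum_integral_adjacent_intervals fun i hi =>
          (hv.intervalIntegrable_of_mem_Icc (hp i hi.le) (hp (i + 1) hi)).smul_continuousOn
            (hg.mono (uIcc_subset_Icc (hp i hi.le) (hp (i + 1) hi))), hp0, hpN]
    _ ≤ ∑ i ∈ Finset.range N, (D * ε * (p (i + 1) - p i) + 2 * η * M) :=
        (norm_sum_le _ _).trans (Finset.sum_le_sum fun i hi => hpiece i (Finset.mem_range.1 hi))
    _ = D * ε * (t - a) + N * (2 * η * M) := by
        rw [Finset.sum_add_distrib, ← Finset.mul_sum, Finset.sum_range_sub, Finset.sum_const,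
          Finset.card_range, nsmul_eq_mul, hp0, hpN]
    _ ≤ D * ε * (b - a) + N * (2 * η * M) := by gcongr; exact ht.2

theorem exists_pos_forall_norm_integral_smul_lt {g : ℝ → E} {a b ε : ℝ}
    (hg : ContinuousOn g (Icc a b)) (D : ℝ) (hε : 0 < ε) :
    ∃ η > 0, ∀ v : ℝ → ℝ, IntegrableOn v (Icc a b) → (∀ s ∈ Icc a b, |v s| ≤ D) →
      (∀ x ∈ Icc a b, |∫ s in a..x, v s| ≤ η) →
      ∀ t ∈ Icc a b, ‖∫ s in a..t, v s • g s‖ < ε := by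
  obtain ⟨M, hM⟩ := isCompact_Icc.exists_bound_of_continuousOn hg
  obtain ⟨ε', hε', hDε'⟩ := exists_pos_mul_lt (half_pos hε) (D * (b - a))
  obtain ⟨N, hN, hgN⟩ := hg.exists_nat_forall_dist_le_of_dist_le_div hε'
  obtain ⟨η, hη, hMη⟩ := exists_pos_mul_lt (half_pos hε) (N * (2 * M))
  refine ⟨η, hη, fun v hv hvD hV t ht => ?_⟩
  have := norm_integral_smul_le_of_forall_dist_le_div hN hε'.le ht hv hg hvD hM hgN hV
  linarith

theorem TendstoUniformlyOn.integral_smul {ι : Type*} {l : Filter ι} {v : ι → ℝ → ℝ}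
    {v₀ : ℝ → ℝ} {g : ℝ → E} {a b D D₀ : ℝ} (hv : ∀ i, IntegrableOn (v i) (Icc a b))
    (hv₀ : IntegrableOn v₀ (Icc a b)) (hvD : ∀ i, ∀ s ∈ Icc a b, |v i s| ≤ D)
    (hv₀D : ∀ s ∈ Icc a b, |v₀ s| ≤ D₀) (hg : ContinuousOn g (Icc a b))
    (h : TendstoUniformlyOn (fun i t => ∫ s in a..t, v i s) (fun t => ∫ s in a..t, v₀ s) l
      (Icc a b)) :
    TendstoUniformlyOn (fun i t => ∫ s in a..t, v i s • g s)
      (fun t => ∫ s in a..t, v₀ s • g s) l (Icc a b) := by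
  rw [Metric.tendstoUniformlyOn_iff] at h ⊢
  intro ε hε
  obtain ⟨η, hη, hηε⟩ := exists_pos_forall_norm_integral_smul_lt hg (D₀ + D) hε
  filter_upwards [h η hη] with i hi t ht
  have ha : a ∈ Icc a b := left_mem_Icc.2 (ht.1.trans ht.2)
  have hgt : ContinuousOn g (uIcc a t) := hg.mono (uIcc_subset_Icc ha ht)
  rw [dist_eq_norm, ← intervalIntegral.integral_sub
    ((hv₀.intervalIntegrable_of_mem_Icc ha ht).smul_continuousOn hgt)
    (((hv i).intervalIntegrable_of_mem_Icc ha ht).smul_continuousOn hgt)]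
  simp only [← sub_smul]
  refine hηε (fun s => v₀ s - v i s) (hv₀.sub (hv i))
    (fun s hs => (abs_sub _ _).trans (add_le_add (hv₀D s hs) (hvD i s hs))) (fun x hx => ?_) t ht
  rw [intervalIntegral.integral_sub (hv₀.intervalIntegrable_of_mem_Icc ha hx)
    ((hv i).intervalIntegrable_of_mem_Icc ha hx), ← Real.dist_eq]
  exact (hi x hx).le

end IntervalIntegral

theorem continuous_exp_neg_smul_mul_mul_exp_smul {𝔸 : Type*} [NormedRing 𝔸] [NormedAlgebra ℚ 𝔸]
    [NormedSpace ℝ 𝔸] [CompleteSpace 𝔸] (A B : 𝔸) :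
    Continuous fun t : ℝ => NormedSpace.exp ((-t) • A) * B * NormedSpace.exp (t • A) := by
  fun_prop

theorem integral_control_matrix_convergence_general
    (m : ℕ) (A B : Matrix (Fin m) (Fin m) ℂ)
    (Θ : ℝ → Matrix (Fin m) (Fin m) ℂ)
    (hΘ : ∀ t : ℝ, Θ t = NormedSpace.exp ((-t) • A) * B * NormedSpace.exp (t • A))
    (T : ℝ) (C : ℝ)
    (u : ℝ → ℝ) (hu : PiecewiseConstOn u T)
    (w : ℕ → ℝ → ℝ) (hw : ∀ k, PiecewiseConstOn (w k) T)
    (hwbound : ∀ k, ∀ t : ℝ, |w k t| ≤ C)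
    (hconv : TendstoUniformlyOn (fun k t => ∫ s in (0 : ℝ)..t, w k s)
      (fun t => ∫ s in (0 : ℝ)..t, u s) Filter.atTop (Set.Icc 0 T)) :
    TendstoUniformlyOn (fun k t => ∫ s in (0 : ℝ)..t, w k s • Θ s)
      (fun t => ∫ s in (0 : ℝ)..t, u s • Θ s) Filter.atTop (Set.Icc 0 T) := by
  obtain ⟨Du, hDu⟩ := hu.exists_abs_le
  have hΘc : Continuous Θ := by
    -- `NormedSpace.exp_continuous` needs a `NormedAlgebra ℚ` structure, which instance search
    -- does not find for matrices with the L2 operator norm.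
    let _ : NormedAlgebra ℚ (Matrix (Fin m) (Fin m) ℂ) := .restrictScalars ℚ ℂ _
    rw [funext hΘ]
    exact continuous_exp_neg_smul_mul_mul_exp_smul A B
  exact TendstoUniformlyOn.integral_smul (fun k => (hw k).integrableOn) hu.integrableOn
    (fun k s _ => hwbound k s) hDu hΘc.continuousOn hconv

/-- if the primitives of `w_k` converge uniformly to the primitive of `u`,
then `∫_0^t w_k Θ → ∫_0^t u Θ` uniformly on `[0,T]`, where `Θ(t) = exp(-tA) B exp(tA)`,
`A` is skew-Hermitian, and matrices carry the operator norm. -/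
theorem integral_control_matrix_convergence
    (m : ℕ) (A B : Matrix (Fin m) (Fin m) ℂ)
    (hA : A.conjTranspose = -A)
    (Θ : ℝ → Matrix (Fin m) (Fin m) ℂ)
    (hΘ : ∀ t : ℝ, Θ t = NormedSpace.exp ((-t) • A) * B * NormedSpace.exp (t • A))
    (T : ℝ) (hT : 0 < T) (C : ℝ) (hC : 0 < C)
    (u : ℝ → ℝ) (hu : PiecewiseConstOn u T)
    (w : ℕ → ℝ → ℝ) (hw : ∀ k, PiecewiseConstOn (w k) T)
    (hwbound : ∀ k, ∀ t : ℝ, |w k t| ≤ C)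
    (hconv : TendstoUniformlyOn (fun k t => ∫ s in (0 : ℝ)..t, w k s)
      (fun t => ∫ s in (0 : ℝ)..t, u s) Filter.atTop (Set.Icc 0 T)) :
    TendstoUniformlyOn (fun k t => ∫ s in (0 : ℝ)..t, w k s • Θ s)
      (fun t => ∫ s in (0 : ℝ)..t, u s • Θ s) Filter.atTop (Set.Icc 0 T) :=
  integral_control_matrix_convergence_general m A B Θ hΘ T C u hu w hw hwbound hconv
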